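/- If D ⊂ R^d is convex and u = 1_{D^c} is the indicator of its complement, then for every radially symmetric probability density b_r supported on B_r(0), the function C_r(u)(x) = u(x)·(b_r ∗ u)(x) − (1/2)·u(x) is nonnegative for all x ∈ R^d. -/

import Mathlib

/-!
Separate `x ∉ D` from the closed convex set `D` by a continuous linear functional `f`. The
translate `x + {f ≥ 0}` of a half-space then lies in `Dᶜ`, so the mass that `b (· - x)` gives
to `Dᶜ` is at least the mass `b` gives to `{f ≥ 0}`. Since `b` is even and every `z` satisfies
`0 ≤ f z` or `0 ≤ f (-z)`, that mass is at least half of `∫ b = 1`.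
-/

open MeasureTheory

section

variable {G : Type*} [AddGroup G] [MeasurableSpace G] {μ : Measure G} {g : G → ℝ}

theorem setIntegral_neg_eq_of_even [MeasurableNeg G] [μ.IsNegInvariant] (hg : g.Even)
    (S : Set G) : ∫ z in -S, g z ∂μ = ∫ z in S, g z ∂μ := by
  rw [← Set.neg_preimage, ← (Measure.measurePreserving_neg μ).setIntegral_preimage_emb
    (measurableEmbedding_neg) g S]
  exact integral_congr_ae (ae_of_all _ fun z => (hg z).symm)

theorem integral_le_two_mul_setIntegral_of_even [MeasurableNeg G] [μ.IsNegInvariant]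
    (hg0 : 0 ≤ g) (hgi : Integrable g μ) (hg : g.Even) {S : Set G} (hS : ∀ z, z ∈ S ∨ -z ∈ S) :
    ∫ z, g z ∂μ ≤ 2 * ∫ z in S, g z ∂μ := by
  have hcover : S ∪ -S = Set.univ := Set.eq_univ_of_forall fun z => by
    rcases hS z with h | h <;> simp [Set.mem_neg, h]
  calc ∫ z, g z ∂μ = ∫ z in S ∪ -S, g z ∂μ := by rw [hcover, Measure.restrict_univ]
    _ ≤ ∫ z, g z ∂(μ.restrict S + μ.restrict (-S)) :=
      integral_mono_measure (Measure.restrict_union_le S (-S)) (ae_of_all _ hg0)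
        (hgi.restrict.add_measure hgi.restrict)
    _ = 2 * ∫ z in S, g z ∂μ := by
      rw [integral_add_measure hgi.restrict hgi.restrict, setIntegral_neg_eq_of_even hg, two_mul]

theorem setIntegral_le_setIntegral_comp_sub_right [MeasurableAdd G] [μ.IsAddRightInvariant]
    (hg0 : 0 ≤ g) (hgi : Integrable g μ) {S T : Set G} {x : G} (hST : ∀ z ∈ S, z + x ∈ T) :
    ∫ z in S, g z ∂μ ≤ ∫ y in T, g (y - x) ∂μ := by
  rw [← (measurePreserving_sub_right μ x).setIntegral_preimage_emb
    (measurableEmbedding_subRight x) g S]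
  refine setIntegral_mono_set (hgi.comp_sub_right x).integrableOn
    (ae_of_all _ fun y => hg0 (y - x)) <| LE.le.eventuallyLE fun y (hy : y - x ∈ S) => ?_
  simpa using hST _ hy

end

theorem convex_indicator_constraint_nonneg_general (d : ℕ)
    (D : Set (EuclideanSpace ℝ (Fin d))) (hDc : IsClosed D) (hD : Convex ℝ D)
    (b : EuclideanSpace ℝ (Fin d) → ℝ)
    (hb0 : ∀ y, 0 ≤ b y)
    (hbsym : ∀ y, b (-y) = b y)
    (hbint : ∫ y, b y = 1) :
    ∀ x : EuclideanSpace ℝ (Fin d),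
      0 ≤ Set.indicator Dᶜ 1 x * (∫ y, Set.indicator Dᶜ 1 y * b (y - x)) -
        (1 / 2 : ℝ) * Set.indicator Dᶜ 1 x := by
  intro x
  by_cases hx : x ∈ D
  · simp [hx]
  have hbi : Integrable b := Integrable.of_integral_ne_zero (by simp [hbint])
  obtain ⟨f, c, hfD, hfx⟩ := geometric_hahn_banach_closed_point hD hDc hx
  have hhalf : ∀ z, z ∈ {z | 0 ≤ f z} ∨ -z ∈ {z | 0 ≤ f z} := fun z => by
    simpa using le_total 0 (f z)
  have htranslate : ∀ z ∈ {z | 0 ≤ f z}, z + x ∈ Dᶜ := fun z (hz : 0 ≤ f z) hzx => by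
    linarith [hfD _ hzx, map_add f z x]
  have hmass : 1 ≤ 2 * ∫ y in Dᶜ, b (y - x) := by
    calc 1 = ∫ z, b z := hbint.symm
      _ ≤ 2 * ∫ z in {z | 0 ≤ f z}, b z :=
        integral_le_two_mul_setIntegral_of_even hb0 hbi hbsym hhalf
      _ ≤ 2 * ∫ y in Dᶜ, b (y - x) := by
        gcongr; exact setIntegral_le_setIntegral_comp_sub_right hb0 hbi htranslate
  simp_rw [Set.indicator_of_mem (show x ∈ Dᶜ from hx), Pi.one_apply, one_mul]
  have hconv : ∀ y, Dᶜ.indicator 1 y * b (y - x) = Dᶜ.indicator (fun y => b (y - x)) y :=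
    fun y => by by_cases hy : y ∈ Dᶜ <;> simp [hy]
  simp_rw [hconv, integral_indicator hDc.isOpen_compl.measurableSet]
  linarith

theorem convex_indicator_constraint_nonneg (d : ℕ) (hd : 1 ≤ d)
    (D : Set (EuclideanSpace ℝ (Fin d))) (hDc : IsClosed D) (hD : Convex ℝ D)
    (r : ℝ) (hr : 0 < r)
    (b : EuclideanSpace ℝ (Fin d) → ℝ)
    (hb0 : ∀ y, 0 ≤ b y) (hbm : Measurable b)
    (hbsym : ∀ y, b (-y) = b y)
    (hbsupp : ∀ y, r < ‖y‖ → b y = 0)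
    (hbint : ∫ y, b y = 1) :
    ∀ x : EuclideanSpace ℝ (Fin d),
      0 ≤ Set.indicator Dᶜ 1 x * (∫ y, Set.indicator Dᶜ 1 y * b (y - x)) -
        (1 / 2 : ℝ) * Set.indicator Dᶜ 1 x :=
  convex_indicator_constraint_nonneg_general d D hDc hD b hb0 hbsym hbint
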